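/- arXiv:2105.08815 — 2 statements merged into one kernel-verified Lean document; each statement's English description precedes it below -/
import Mathlib

section
/- Let A be a bal-algebra, a ∈ A, and r, s ∈ ℝ with r < s. If a ⊔ r·1 ≥ s·1, then a ≥ s·1. -/
/-! With `x = s - a` and the constant `t = s - r > 0`, the hypothesis says `x ⊓ t ≤ 0`, hence
`x⁺ ⊓ t ≤ 0` by distributivity of lattice-ordered groups. As `1` is a strong unit, some
`0 < ε ≤ 1` has `ε • x⁺ ≤ t`; then `ε • x⁺ ≤ x⁺ ⊓ t ≤ 0`, so `x ≤ x⁺ ≤ 0`. -/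

/-- A bounded archimedean ℓ-algebra (bal-algebra): a commutative ℝ-algebra with a
lattice order compatible with addition and multiplication, in which the algebra
map from ℝ is order-preserving, `1` is a strong order unit, and the order is
archimedean. -/
structure IsBal (A : Type*) [CommRing A] [Lattice A] [Algebra ℝ A] : Prop where
  add_le_add_right : ∀ a b : A, a ≤ b → ∀ c : A, a + c ≤ b + c
  mul_nonneg : ∀ a b : A, 0 ≤ a → 0 ≤ b → 0 ≤ a * b
  algebraMap_mono : Monotone (algebraMap ℝ A)
  strong_unit : ∀ a : A, ∃ n : ℕ, 1 ≤ n ∧ a ≤ n • (1 : A)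
  arch : ∀ a b : A, (∀ n : ℕ, 1 ≤ n → n • a ≤ b) → a ≤ 0

/-- An ℓ-ideal: a ring ideal `I` such that `|a| ≤ |b|` and `b ∈ I` imply `a ∈ I`,
where `|a| = a ⊔ (-a)`. -/
def IsLIdeal {A : Type*} [CommRing A] [Lattice A] (I : Ideal A) : Prop :=
  ∀ a b : A, b ∈ I → a ⊔ -a ≤ b ⊔ -b → a ∈ I

/-- An archimedean ℓ-ideal: whenever `(n • a - b)⁺ ∈ I` for every integer `n ≥ 1`,
also `a⁺ ∈ I`, where `x⁺ = x ⊔ 0`. -/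
def IsArchLIdeal {A : Type*} [CommRing A] [Lattice A] (I : Ideal A) : Prop :=
  ∀ a b : A, (∀ n : ℕ, 1 ≤ n → (n • a - b) ⊔ 0 ∈ I) → a ⊔ 0 ∈ I

/-- The archimedean hull of a subset `S`: the intersection of all archimedean
ℓ-ideals containing `S`. -/
def archHull {A : Type*} [CommRing A] [Lattice A] (S : Set A) : Ideal A :=
  sInf {I : Ideal A | IsLIdeal I ∧ IsArchLIdeal I ∧ S ⊆ ↑I}

theorem posPart_inf_nonpos {α : Type*} [Lattice α] [AddCommGroup α] [IsOrderedAddMonoid α]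
    {x t : α} (h : x ⊓ t ≤ 0) : x⁺ ⊓ t ≤ 0 := by
  let := AddCommGroup.toDistribLattice α
  rw [posPart_def, inf_sup_right]
  exact sup_le h inf_le_left

theorem nonpos_of_inf_nonpos_of_smul_le {𝕜 M : Type*} [Field 𝕜] [LinearOrder 𝕜]
    [IsStrictOrderedRing 𝕜] [Lattice M] [AddCommGroup M] [IsOrderedAddMonoid M] [Module 𝕜 M]
    [PosSMulMono 𝕜 M] {ε : 𝕜} (hε : 0 < ε) (hε₁ : ε ≤ 1) {p v : M} (hp : 0 ≤ p)
    (hpv : ε • p ≤ v) (h : p ⊓ v ≤ 0) : p ≤ 0 :=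
  (smul_nonpos_iff_nonpos_of_pos_left hε).1 <|
    (le_inf (smul_le_of_le_one_left hp hε₁) hpv).trans h

namespace IsBal
variable {A : Type*} [CommRing A] [Lattice A] [Algebra ℝ A]

theorem isOrderedAddMonoid (hA : IsBal A) : IsOrderedAddMonoid A where
  add_le_add_left := hA.add_le_add_right

theorem posSMulMono (hA : IsBal A) : PosSMulMono ℝ A := by
  have := hA.isOrderedAddMonoid
  refine ⟨fun c hc a b hab => ?_⟩
  rw [← sub_nonneg, ← smul_sub, Algebra.smul_def]
  exact hA.mul_nonneg _ _ (by simpa using hA.algebraMap_mono hc) (sub_nonneg.2 hab)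

theorem exists_smul_le_algebraMap (hA : IsBal A) (p : A) {c : ℝ} (hc : 0 < c) :
    ∃ ε : ℝ, 0 < ε ∧ ε ≤ 1 ∧ ε • p ≤ algebraMap ℝ A c := by
  have := hA.posSMulMono
  obtain ⟨m, hm, hpm⟩ := hA.strong_unit p
  have hm' : (0 : ℝ) < m := by exact_mod_cast hm
  refine ⟨min 1 (c / m), lt_min one_pos (div_pos hc hm'), min_le_left _ _, ?_⟩
  calc min 1 (c / m) • p ≤ min 1 (c / m) • (m • (1 : A)) :=
        smul_le_smul_of_nonneg_left hpm (le_min zero_le_one (div_pos hc hm').le)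
    _ = algebraMap ℝ A (min 1 (c / m) * m) := by
        rw [map_mul, map_natCast, Algebra.smul_def, nsmul_eq_mul, mul_one]
    _ ≤ algebraMap ℝ A c := hA.algebraMap_mono <| by
        rw [← le_div_iff₀ hm']; exact min_le_right _ _

end IsBal

/-- In a bal-algebra, if `r < s` are reals and `a ⊔ r·1 ≥ s·1`, then `a ≥ s·1`. -/
theorem ge_of_sup_const_ge {A : Type*} [CommRing A] [Lattice A] [Algebra ℝ A] (hA : IsBal A)
    (a : A) (r s : ℝ) (hrs : r < s)
    (h : algebraMap ℝ A s ≤ a ⊔ algebraMap ℝ A r) :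
    algebraMap ℝ A s ≤ a := by
  have := hA.isOrderedAddMonoid
  have := hA.posSMulMono
  have hdisj : (algebraMap ℝ A s - a) ⊓ algebraMap ℝ A (s - r) ≤ 0 := by
    rwa [map_sub, ← sub_sup, sub_nonpos]
  obtain ⟨ε, hε, hε₁, hεp⟩ := hA.exists_smul_le_algebraMap (algebraMap ℝ A s - a)⁺ (sub_pos.2 hrs)
  have hposPart : (algebraMap ℝ A s - a)⁺ ≤ 0 :=
    nonpos_of_inf_nonpos_of_smul_le hε hε₁ (posPart_nonneg _) hεp (posPart_inf_nonpos hdisj)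
  exact sub_nonpos.1 ((le_posPart _).trans hposPart)
end

section
/- Let A be a bal-algebra and let X be the set of proper archimedean ℓ-ideals of A, ordered by inclusion and equipped with the Alexandroff topology whose open sets are the upward-closed subsets of X. For I ∈ X, let U_I = {J ∈ X | ar(I + J) = A} (i.e., the join of I and J in the lattice of archimedean ℓ-ideals is A). Then U_I is a regular open subset of X; moreover ↑I ∩ U_I = ∅, and every regular open subset V of X with ↑I ∩ V = ∅ satisfies V ⊆ U_I. Hence U_I is the complement of ↑I = {J ∈ X | I ⊆ J} in the boolean algebra of regular open subsets of X. -/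
/-- The Alexandroff topology on a preorder: opens are exactly the upward-closed
sets. -/
def alexandroff (X : Type*) [Preorder X] : TopologicalSpace X where
  IsOpen := IsUpperSet
  isOpen_univ := isUpperSet_univ
  isOpen_inter := fun _ _ hs ht => hs.inter ht
  isOpen_sUnion := fun _ h => isUpperSet_sUnion h

/-- The set of proper archimedean ℓ-ideals of `A`, ordered by inclusion. -/
abbrev ProperArchLIdeal (A : Type*) [CommRing A] [Lattice A] :=
  {I : Ideal A // IsLIdeal I ∧ IsArchLIdeal I ∧ I ≠ ⊤}

noncomputable instance (A : Type*) [CommRing A] [Lattice A] :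
    TopologicalSpace (ProperArchLIdeal A) := alexandroff _

/-- `U_I = {J | ar(I + J) = A}`: the proper archimedean ℓ-ideals whose join with
`I` in the lattice of archimedean ℓ-ideals is all of `A`. -/
def complUpperSet {A : Type*} [CommRing A] [Lattice A] (I : ProperArchLIdeal A) :
    Set (ProperArchLIdeal A) :=
  {J : ProperArchLIdeal A | archHull ((I.1 + J.1 : Ideal A) : Set A) = ⊤}

/-!
Two proper archimedean ℓ-ideals `I`, `J` have a common upper bound in `X` exactly when
`ar(I + J)` is proper, and then `ar(I + J)` is one. Hence `U_I` is the complement of the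
lower closure of `↑I`, which in the Alexandroff topology is the closure of the open set
`↑I`. In any space the complement of the closure of an open set `U` is regular open,
disjoint from `U`, and contains every open set disjoint from `U`.
-/

open Set

section ArchHull

variable {A : Type*} [CommRing A] [Lattice A]

lemma subset_archHull (S : Set A) : S ⊆ archHull S := fun _ hx =>
  Submodule.mem_sInf.mpr fun _ hK => hK.2.2 hx

lemma isLIdeal_archHull (S : Set A) : IsLIdeal (archHull S) := fun a b hb hab =>
  Submodule.mem_sInf.mpr fun K hK => hK.1 a b (Submodule.mem_sInf.mp hb K hK) hab

lemma isArchLIdeal_archHull (S : Set A) : IsArchLIdeal (archHull S) := fun a b h =>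
  Submodule.mem_sInf.mpr fun K hK =>
    hK.2.1 a b fun n hn => Submodule.mem_sInf.mp (h n hn) K hK

lemma archHull_le_iff {S : Set A} {K : Ideal A} (hK : IsLIdeal K) (hK' : IsArchLIdeal K) :
    archHull S ≤ K ↔ S ⊆ K :=
  ⟨fun h => (subset_archHull S).trans h, fun h => sInf_le ⟨hK, hK', h⟩⟩

end ArchHull

section ProperArchLIdeal

variable {A : Type*} [CommRing A] [Lattice A]

instance : Topology.IsUpperSet (ProperArchLIdeal A) := ⟨rfl⟩

lemma archHull_sup_ne_top_iff (I J : ProperArchLIdeal A) :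
    archHull ((I.1 ⊔ J.1 : Ideal A) : Set A) ≠ ⊤ ↔ ∃ L : ProperArchLIdeal A, I ≤ L ∧ J ≤ L := by
  constructor
  · intro h
    have hle : I.1 ⊔ J.1 ≤ archHull ((I.1 ⊔ J.1 : Ideal A) : Set A) := subset_archHull _
    exact ⟨⟨_, isLIdeal_archHull _, isArchLIdeal_archHull _, h⟩,
      show I.1 ≤ _ from le_sup_left.trans hle, show J.1 ≤ _ from le_sup_right.trans hle⟩
  · rintro ⟨L, hIL, hJL⟩ h
    have hle := (archHull_le_iff L.2.1 L.2.2.1).mpr (sup_le hIL hJL : I.1 ⊔ J.1 ≤ L.1)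
    exact L.2.2.2 (top_le_iff.mp (h.symm.trans_le hle))

lemma complUpperSet_eq_compl_lowerClosure (I : ProperArchLIdeal A) :
    complUpperSet I = (lowerClosure (Ici I) : Set (ProperArchLIdeal A))ᶜ := by
  ext J
  rw [mem_compl_iff, SetLike.mem_coe, mem_lowerClosure, ← not_iff_not, not_not]
  exact archHull_sup_ne_top_iff I J

end ProperArchLIdeal

lemma IsOpen.interior_closure_compl_closure {X : Type*} [TopologicalSpace X] {U : Set X}
    (hU : IsOpen U) : interior (closure (closure U)ᶜ) = (closure U)ᶜ := by
  rw [← interior_compl]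
  simpa only [hU.isClosed_compl.closure_eq] using interior_closure_idem (s := Uᶜ)

theorem complUpperSet_is_regular_complement_general {A : Type*} [CommRing A] [Lattice A]
    (I : ProperArchLIdeal A) :
    interior (closure (complUpperSet I)) = complUpperSet I ∧
    Set.Ici I ∩ complUpperSet I = ∅ ∧
    (∀ V : Set (ProperArchLIdeal A), interior (closure V) = V →
      Set.Ici I ∩ V = ∅ → V ⊆ complUpperSet I) := by
  have hIci : IsOpen (Ici I) := Topology.IsUpperSet.isOpen_iff_isUpperSet.mpr (isUpperSet_Ici I)
  rw [complUpperSet_eq_compl_lowerClosure, ← Topology.IsUpperSet.closure_eq_lowerClosure]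
  refine ⟨hIci.interior_closure_compl_closure,
    sdiff_eq_empty.mpr subset_closure, fun V hV hdisj => ?_⟩
  have hV : IsOpen V := hV ▸ isOpen_interior
  exact subset_compl_iff_disjoint_right.mpr
    ((disjoint_iff_inter_eq_empty.mpr hdisj).symm.closure_right hV)

/-- In the Alexandroff space of proper archimedean ℓ-ideals of a bal-algebra `A`,
the set `U_I = {J | ar(I + J) = A}` is regular open, is disjoint from
`↑I = {J | I ⊆ J}`, and contains every regular open set disjoint from `↑I`; hence
`U_I` is the complement of `↑I` in the boolean algebra of regular open sets. -/
theorem complUpperSet_is_regular_complement {A : Type*} [CommRing A] [Lattice A]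
    [Algebra ℝ A] (hA : IsBal A) (I : ProperArchLIdeal A) :
    interior (closure (complUpperSet I)) = complUpperSet I ∧
    Set.Ici I ∩ complUpperSet I = ∅ ∧
    (∀ V : Set (ProperArchLIdeal A), interior (closure V) = V →
      Set.Ici I ∩ V = ∅ → V ⊆ complUpperSet I) :=
  complUpperSet_is_regular_complement_general I
end
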